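/- Every sequence recognized by a copyless cost-register automaton over a unary alphabet belongs to PolyRat. -/
import Mathlib


/-- The smallest class of sequences `ℕ → ℚ` containing all arithmetic and all geometric
sequences and closed under sum, Hadamard product, shift, and `k`-ary shuffle for `k ≥ 1`. -/
inductive PolyRat : (ℕ → ℚ) → Prop where
  | arith (a b : ℚ) (u : ℕ → ℚ) (h0 : u 0 = a) (hs : ∀ n, u (n + 1) = u n + b) : PolyRat u
  | geo (a l : ℚ) (u : ℕ → ℚ) (h0 : u 0 = a) (hs : ∀ n, u (n + 1) = l * u n) : PolyRat u
  | sum (u v : ℕ → ℚ) (hu : PolyRat u) (hv : PolyRat v) : PolyRat (fun n => u n + v n)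
  | had (u v : ℕ → ℚ) (hu : PolyRat u) (hv : PolyRat v) : PolyRat (fun n => u n * v n)
  | shift (a : ℚ) (u w : ℕ → ℚ) (hu : PolyRat u) (h0 : w 0 = a)
      (hs : ∀ n, w (n + 1) = u n) : PolyRat w
  | shuffle (k : ℕ) (hk : 1 ≤ k) (us : Fin k → ℕ → ℚ) (w : ℕ → ℚ)
      (hw : ∀ (n : ℕ) (i : Fin k), w (k * n + (i : ℕ)) = us i n)
      (hus : ∀ i, PolyRat (us i)) : PolyRat w

/-- Expressions over registers `X`: registers, rational constants, sums and products. -/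
inductive Expr (X : Type) where
  | reg : X → Expr X
  | const : ℚ → Expr X
  | add : Expr X → Expr X → Expr X
  | mul : Expr X → Expr X → Expr X

/-- Evaluate an expression under a valuation of the registers. -/
def Expr.eval {X : Type} (ν : X → ℚ) : Expr X → ℚ
  | .reg x => ν x
  | .const r => r
  | .add e₁ e₂ => e₁.eval ν + e₂.eval ν
  | .mul e₁ e₂ => e₁.eval ν * e₂.eval ν

/-- Apply a substitution to an expression, replacing each register by its assigned
expression. -/
def Expr.subst {X : Type} (σ : X → Expr X) : Expr X → Expr X
  | .reg x => σ x
  | .const r => .const r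
  | .add e₁ e₂ => .add (e₁.subst σ) (e₂.subst σ)
  | .mul e₁ e₂ => .mul (e₁.subst σ) (e₂.subst σ)

/-- Number of syntactic occurrences of register `x` in an expression. -/
def Expr.count {X : Type} [DecidableEq X] (x : X) : Expr X → ℕ
  | .reg y => if y = x then 1 else 0
  | .const _ => 0
  | .add e₁ e₂ => e₁.count x + e₂.count x
  | .mul e₁ e₂ => e₁.count x + e₂.count x

/-- A substitution is copyless if each register occurs at most once in total (counting
syntactic occurrences) among the expressions assigned to the registers. -/
def Copyless {d : ℕ} (σ : Fin d → Expr (Fin d)) : Prop :=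
  ∀ x : Fin d, (∑ y : Fin d, (σ y).count x) ≤ 1

/-- A cost-register automaton over a unary alphabet, with finitely many states `Fin m`,
finitely many registers `Fin d`, transition function `δ` (next state and substitution),
initial state `q0`, initial valuation `ν0`, and output expressions `μ`. -/
structure CRA (m d : ℕ) where
  δ : Fin m → Fin m × (Fin d → Expr (Fin d))
  q0 : Fin m
  ν0 : Fin d → ℚ
  μ : Fin m → Expr (Fin d)

/-- The state reached after `n` steps together with the accumulated substitution
`e ↦ σ₁(σ₂(⋯σₙ(e)⋯))` along the unique run of length `n`. -/
def CRA.run {m d : ℕ} (A : CRA m d) : ℕ → Fin m × (Expr (Fin d) → Expr (Fin d))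
  | 0 => (A.q0, id)
  | n + 1 =>
    let p := A.run n
    ((A.δ p.1).1, fun e => p.2 (e.subst (A.δ p.1).2))

/-- The output of a CRA on input `n`: the value under the initial valuation `ν0` of the
expression `σ₁(σ₂(⋯σₙ(μ(qₙ))⋯))`. -/
def CRA.output {m d : ℕ} (A : CRA m d) (n : ℕ) : ℚ :=
  Expr.eval A.ν0 ((A.run n).2 (A.μ (A.run n).1))

/-- A CRA is copyless if every substitution occurring in its transitions is copyless. -/
def CRA.IsCopyless {m d : ℕ} (A : CRA m d) : Prop :=
  ∀ q : Fin m, Copyless (A.δ q).2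

namespace CRAProof

variable {d : ℕ}

lemma eval_subst (σ : Fin d → Expr (Fin d)) (ν : Fin d → ℚ) :
    ∀ e : Expr (Fin d), (e.subst σ).eval ν = e.eval (fun x => (σ x).eval ν)
  | .reg x => rfl
  | .const r => rfl
  | .add e₁ e₂ => by
      simp only [Expr.subst, Expr.eval, eval_subst σ ν e₁, eval_subst σ ν e₂]
  | .mul e₁ e₂ => by
      simp only [Expr.subst, Expr.eval, eval_subst σ ν e₁, eval_subst σ ν e₂]

lemma subst_subst (σ ρ : Fin d → Expr (Fin d)) :
    ∀ e : Expr (Fin d), (e.subst σ).subst ρ = e.subst (fun x => (σ x).subst ρ)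
  | .reg x => rfl
  | .const r => rfl
  | .add e₁ e₂ => by
      simp only [Expr.subst, subst_subst σ ρ e₁, subst_subst σ ρ e₂]
  | .mul e₁ e₂ => by
      simp only [Expr.subst, subst_subst σ ρ e₁, subst_subst σ ρ e₂]

lemma count_subst (σ : Fin d → Expr (Fin d)) (x : Fin d) :
    ∀ e : Expr (Fin d), (e.subst σ).count x = ∑ z : Fin d, e.count z * (σ z).count x
  | .reg y => by
      simp only [Expr.subst, Expr.count]
      rw [Finset.sum_eq_single y]
      · simp
      · intro b _ hb
        simp [Ne.symm hb]
      · simp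
  | .const r => by simp [Expr.subst, Expr.count]
  | .add e₁ e₂ => by
      simp only [Expr.subst, Expr.count, count_subst σ x e₁, count_subst σ x e₂,
        ← Finset.sum_add_distrib, add_mul]
  | .mul e₁ e₂ => by
      simp only [Expr.subst, Expr.count, count_subst σ x e₁, count_subst σ x e₂,
        ← Finset.sum_add_distrib, add_mul]

lemma eval_congr (ν ν' : Fin d → ℚ) :
    ∀ e : Expr (Fin d), (∀ z, 1 ≤ e.count z → ν z = ν' z) → e.eval ν = e.eval ν'
  | .reg y, h => by
      simp only [Expr.eval]
      exact h y (by simp [Expr.count])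
  | .const r, _ => rfl
  | .add e₁ e₂, h => by
      simp only [Expr.eval]
      rw [eval_congr ν ν' e₁ (fun z hz => h z (by simp only [Expr.count]; omega)),
        eval_congr ν ν' e₂ (fun z hz => h z (by simp only [Expr.count]; omega))]
  | .mul e₁ e₂, h => by
      simp only [Expr.eval]
      rw [eval_congr ν ν' e₁ (fun z hz => h z (by simp only [Expr.count]; omega)),
        eval_congr ν ν' e₂ (fun z hz => h z (by simp only [Expr.count]; omega))]

lemma copyless_reg : Copyless (fun x : Fin d => Expr.reg x) := by
  intro x
  rw [Finset.sum_eq_single x] <;> simp +contextual [Expr.count]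

lemma copyless_comp {σ ρ : Fin d → Expr (Fin d)} (hσ : Copyless σ) (hρ : Copyless ρ) :
    Copyless (fun y => (σ y).subst ρ) := by
  intro x
  calc ∑ y : Fin d, ((σ y).subst ρ).count x
      = ∑ y : Fin d, ∑ z : Fin d, (σ y).count z * (ρ z).count x := by
        simp only [count_subst]
    _ = ∑ z : Fin d, (∑ y : Fin d, (σ y).count z) * (ρ z).count x := by
        rw [Finset.sum_comm]
        simp [Finset.sum_mul]
    _ ≤ ∑ z : Fin d, 1 * (ρ z).count x := by
        apply Finset.sum_le_sum
        intro z _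
        exact Nat.mul_le_mul_right _ (hσ z)
    _ ≤ 1 := by simpa using hρ x

lemma count_le_one {σ : Fin d → Expr (Fin d)} (hσ : Copyless σ) (x y : Fin d) :
    (σ y).count x ≤ 1 :=
  le_trans (Finset.single_le_sum (f := fun y => (σ y).count x) (fun _ _ => Nat.zero_le _)
    (Finset.mem_univ y)) (hσ x)

lemma count_unique {σ : Fin d → Expr (Fin d)} (hσ : Copyless σ) {x y y' : Fin d}
    (h : 1 ≤ (σ y).count x) (h' : 1 ≤ (σ y').count x) : y = y' := by
  by_contra hne
  have := hσ x
  have h2 : 2 ≤ ∑ z : Fin d, (σ z).count x := by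
    have : ({y, y'} : Finset (Fin d)).sum (fun z => (σ z).count x) ≤
        ∑ z : Fin d, (σ z).count x :=
      Finset.sum_le_sum_of_subset (Finset.subset_univ _)
    rw [Finset.sum_pair hne] at this
    omega
  omega

end CRAProof
namespace CRAProof

variable {d : ℕ}

lemma polyRat_const (c : ℚ) : PolyRat (fun _ => c) :=
  PolyRat.arith c 0 _ rfl (fun _ => by simp)

lemma polyRat_congr {u v : ℕ → ℚ} (h : ∀ n, u n = v n) (hu : PolyRat u) : PolyRat v := by
  have : u = v := funext h
  rwa [this] at hu

lemma polyRat_affineRec (α β : ℚ) (w : ℕ → ℚ) (h : ∀ n, w (n + 1) = α * w n + β) :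
    PolyRat w := by
  by_cases hα : α = 1
  · exact PolyRat.arith (w 0) β w rfl (fun n => by rw [h n, hα]; ring)
  · set c := β / (1 - α) with hc
    have hcβ : c * (1 - α) = β := by
      rw [hc, div_mul_cancel₀]
      exact sub_ne_zero.mpr (Ne.symm hα)
    have g : PolyRat (fun n => w n - c) :=
      PolyRat.geo (w 0 - c) α _ rfl (fun n => by
        simp only [h n]
        nlinarith [hcβ])
    have s := PolyRat.sum _ _ g (polyRat_const c)
    exact polyRat_congr (fun n => by ring) s

lemma polyRat_tail_to_full (u : ℕ → ℚ) :
    ∀ s : ℕ, PolyRat (fun n => u (s + n)) → PolyRat u := by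
  intro s
  induction s with
  | zero => intro h; exact polyRat_congr (fun n => by rw [Nat.zero_add]) h
  | succ s ih =>
      intro h
      apply ih
      refine PolyRat.shift (u s) (fun n => u (s + 1 + n)) _ h rfl (fun n => ?_)
      congr 1
      omega

lemma eval_polyRat (W : ℕ → Fin d → ℚ) (hW : ∀ x, PolyRat (fun n => W n x)) :
    ∀ e : Expr (Fin d), PolyRat (fun n => e.eval (W n))
  | .reg x => hW x
  | .const r => polyRat_const r
  | .add e₁ e₂ =>
      polyRat_congr (fun n => rfl)
        (PolyRat.sum _ _ (eval_polyRat W hW e₁) (eval_polyRat W hW e₂))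
  | .mul e₁ e₂ =>
      polyRat_congr (fun n => rfl)
        (PolyRat.had _ _ (eval_polyRat W hW e₁) (eval_polyRat W hW e₂))

lemma affine (x : Fin d) :
    ∀ e : Expr (Fin d), e.count x ≤ 1 →
      ∃ A B : (Fin d → ℚ) → ℚ,
        (∀ ν, e.eval ν = A ν * ν x + B ν) ∧
        (∀ ν ν', (∀ z, z ≠ x → 1 ≤ e.count z → ν z = ν' z) → A ν = A ν' ∧ B ν = B ν') := by
  intro e
  induction e with
  | reg y =>
      intro _
      by_cases hy : y = x
      · subst hy
        exact ⟨fun _ => 1, fun _ => 0, fun ν => by simp [Expr.eval], fun _ _ _ => ⟨rfl, rfl⟩⟩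
      · refine ⟨fun _ => 0, fun ν => ν y, fun ν => by simp [Expr.eval], fun ν ν' h => ?_⟩
        exact ⟨rfl, h y hy (by simp [Expr.count])⟩
  | const r =>
      intro _
      exact ⟨fun _ => 0, fun _ => r, fun ν => by simp [Expr.eval], fun _ _ _ => ⟨rfl, rfl⟩⟩
  | add e₁ e₂ ih₁ ih₂ =>
      intro hc
      simp only [Expr.count] at hc
      obtain ⟨A₁, B₁, hev₁, hcg₁⟩ := ih₁ (by omega)
      obtain ⟨A₂, B₂, hev₂, hcg₂⟩ := ih₂ (by omega)
      refine ⟨fun ν => A₁ ν + A₂ ν, fun ν => B₁ ν + B₂ ν, fun ν => ?_, fun ν ν' h => ?_⟩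
      · simp only [Expr.eval, hev₁, hev₂]; ring
      · have h₁ := hcg₁ ν ν' (fun z hz hcz => h z hz (by simp only [Expr.count]; omega))
        have h₂ := hcg₂ ν ν' (fun z hz hcz => h z hz (by simp only [Expr.count]; omega))
        constructor
        · show A₁ ν + A₂ ν = A₁ ν' + A₂ ν'
          rw [h₁.1, h₂.1]
        · show B₁ ν + B₂ ν = B₁ ν' + B₂ ν'
          rw [h₁.2, h₂.2]
  | mul e₁ e₂ ih₁ ih₂ =>
      intro hc
      simp only [Expr.count] at hc
      rcases Nat.eq_zero_or_pos (e₁.count x) with h0 | hpos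
      · obtain ⟨A₂, B₂, hev₂, hcg₂⟩ := ih₂ (by omega)
        refine ⟨fun ν => e₁.eval ν * A₂ ν, fun ν => e₁.eval ν * B₂ ν, fun ν => ?_,
          fun ν ν' h => ?_⟩
        · simp only [Expr.eval, hev₂]; ring
        · have he : e₁.eval ν = e₁.eval ν' := by
            apply eval_congr
            intro z hz
            rcases eq_or_ne z x with rfl | hzx
            · omega
            · exact h z hzx (by simp only [Expr.count]; omega)
          have h₂ := hcg₂ ν ν' (fun z hz hcz => h z hz (by simp only [Expr.count]; omega))
          constructor
          · show e₁.eval ν * A₂ ν = e₁.eval ν' * A₂ ν'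
            rw [he, h₂.1]
          · show e₁.eval ν * B₂ ν = e₁.eval ν' * B₂ ν'
            rw [he, h₂.2]
      · have h0 : e₂.count x = 0 := by omega
        obtain ⟨A₁, B₁, hev₁, hcg₁⟩ := ih₁ (by omega)
        refine ⟨fun ν => A₁ ν * e₂.eval ν, fun ν => B₁ ν * e₂.eval ν, fun ν => ?_,
          fun ν ν' h => ?_⟩
        · simp only [Expr.eval, hev₁]; ring
        · have he : e₂.eval ν = e₂.eval ν' := by
            apply eval_congr
            intro z hz
            rcases eq_or_ne z x with rfl | hzx
            · omega
            · exact h z hzx (by simp only [Expr.count]; omega)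
          have h₁ := hcg₁ ν ν' (fun z hz hcz => h z hz (by simp only [Expr.count]; omega))
          constructor
          · show A₁ ν * e₂.eval ν = A₁ ν' * e₂.eval ν'
            rw [he, h₁.1]
          · show B₁ ν * e₂.eval ν = B₁ ν' * e₂.eval ν'
            rw [he, h₁.2]

end CRAProof
namespace CRAProof

variable {d : ℕ}

/-- Iterated composition of a substitution with itself. -/
def spow (τ : Fin d → Expr (Fin d)) : ℕ → Fin d → Expr (Fin d)
  | 0 => fun x => .reg x
  | n + 1 => fun x => (τ x).subst (spow τ n)

lemma copyless_spow {τ : Fin d → Expr (Fin d)} (hτ : Copyless τ) (n : ℕ) :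
    Copyless (spow τ n) := by
  induction n with
  | zero => exact copyless_reg
  | succ n ih => exact copyless_comp hτ ih

lemma spow_add (τ : Fin d → Expr (Fin d)) (a b : ℕ) (x : Fin d) :
    spow τ (a + b) x = (spow τ a x).subst (spow τ b) := by
  induction a generalizing x with
  | zero => simp [spow, Expr.subst]
  | succ a ih =>
      have : a + 1 + b = (a + b) + 1 := by omega
      rw [this]
      show (τ x).subst (spow τ (a + b)) = ((τ x).subst (spow τ a)).subst (spow τ b)
      rw [subst_subst]
      congr 1
      funext z
      exact ih z

/-- Positivity of the count of `x` in a composition. -/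
lemma count_comp_pos {ρ : Fin d → Expr (Fin d)} {x : Fin d} (e : Expr (Fin d)) :
    1 ≤ (e.subst ρ).count x ↔ ∃ z, 1 ≤ e.count z ∧ 1 ≤ (ρ z).count x := by
  rw [count_subst]
  constructor
  · intro h
    have : ∃ z ∈ Finset.univ, e.count z * (ρ z).count x ≠ 0 := by
      by_contra hc
      push_neg at hc
      have : ∑ z : Fin d, e.count z * (ρ z).count x = 0 :=
        Finset.sum_eq_zero (fun z hz => hc z hz)
      omega
    obtain ⟨z, _, hz⟩ := this
    have := Nat.mul_ne_zero_iff.mp hz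
    exact ⟨z, by omega, by omega⟩
  · rintro ⟨z, h1, h2⟩
    calc 1 ≤ e.count z * (ρ z).count x := Nat.one_le_iff_ne_zero.mpr (Nat.mul_ne_zero (by omega) (by omega))
    _ ≤ ∑ z : Fin d, e.count z * (ρ z).count x :=
        Finset.single_le_sum (f := fun z => e.count z * (ρ z).count x)
          (fun _ _ => Nat.zero_le _) (Finset.mem_univ z)

/-- The partial successor function induced by a substitution: `x ↦ y` if `x` occurs
in `σ y`. -/
noncomputable def fOf (σ : Fin d → Expr (Fin d)) (x : Fin d) : Option (Fin d) :=
  if h : ∃ y, 1 ≤ (σ y).count x then some h.choose else none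

lemma fOf_eq_some {σ : Fin d → Expr (Fin d)} (hσ : Copyless σ) {x y : Fin d} :
    fOf σ x = some y ↔ 1 ≤ (σ y).count x := by
  unfold fOf
  constructor
  · intro h
    split at h
    · rename_i hex
      have := hex.choose_spec
      simp only [Option.some.injEq] at h
      rwa [h] at this
    · simp at h
  · intro h
    have hex : ∃ y, 1 ≤ (σ y).count x := ⟨y, h⟩
    rw [dif_pos hex]
    have := hex.choose_spec
    exact congrArg some (count_unique hσ this h)

lemma fOf_eq_none {σ : Fin d → Expr (Fin d)} {x : Fin d} :
    fOf σ x = none ↔ ∀ y, (σ y).count x = 0 := by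
  unfold fOf
  constructor
  · intro h
    split at h
    · simp at h
    · rename_i hex
      push_neg at hex
      intro y
      have := hex y
      omega
  · intro h
    rw [dif_neg]
    push_neg
    intro y
    rw [h y]
    omega

lemma fOf_spow_add {τ : Fin d → Expr (Fin d)} (hτ : Copyless τ) (a b : ℕ) (x : Fin d) :
    fOf (spow τ (a + b)) x = (fOf (spow τ b) x).bind (fOf (spow τ a)) := by
  have hab := copyless_spow hτ (a + b)
  have ha := copyless_spow hτ a
  have hb := copyless_spow hτ b
  rcases hx : fOf (spow τ b) x with _ | z
  · simp only [Option.bind]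
    rw [fOf_eq_none]
    intro y
    by_contra hc
    have hpos : 1 ≤ (spow τ (a + b) y).count x := by omega
    rw [spow_add] at hpos
    obtain ⟨z, h1, h2⟩ := (count_comp_pos _).mp hpos
    rw [fOf_eq_none] at hx
    have := hx z
    omega
  · simp only [Option.bind]
    rw [fOf_eq_some hb] at hx
    rcases hz : fOf (spow τ a) z with _ | y
    · rw [fOf_eq_none]
      intro y
      by_contra hc
      have hpos : 1 ≤ (spow τ (a + b) y).count x := by omega
      rw [spow_add] at hpos
      obtain ⟨z', h1, h2⟩ := (count_comp_pos _).mp hpos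
      have hzz : z' = z := count_unique hb h2 hx
      subst hzz
      rw [fOf_eq_none] at hz
      have := hz y
      omega
    · rw [fOf_eq_some ha] at hz
      rw [fOf_eq_some hab, spow_add]
      exact (count_comp_pos _).mpr ⟨z, hz, hx⟩

/-- Every copyless substitution has a power which is "stable": every register occurring
in the `y`-component forces `y` itself to occur in its own component. -/
lemma exists_good_power {τ : Fin d → Expr (Fin d)} (hτ : Copyless τ) :
    ∃ L, 1 ≤ L ∧ ∀ x y, 1 ≤ ((spow τ L) y).count x → 1 ≤ ((spow τ L) y).count y := by
  -- pigeonhole on the induced partial functions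
  obtain ⟨a', b', hne, heq⟩ :=
    Finite.exists_ne_map_eq_of_infinite (fun n : ℕ => fOf (spow τ n))
  obtain ⟨a, b, hab, heq⟩ : ∃ a b : ℕ, a < b ∧ fOf (spow τ a) = fOf (spow τ b) := by
    rcases lt_or_gt_of_ne hne with h | h
    · exact ⟨a', b', h, heq⟩
    · exact ⟨b', a', h, heq.symm⟩
  set p := b - a with hp
  have hp1 : 1 ≤ p := by omega
  have hper : ∀ t, fOf (spow τ (a + t + p)) = fOf (spow τ (a + t)) := by
    intro t
    have e1 : a + t + p = t + b := by omega
    have e2 : a + t = t + a := by omega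
    rw [e1, e2]
    funext x
    rw [fOf_spow_add hτ t b x, fOf_spow_add hτ t a x, ← heq]
  have hmul : ∀ t k, fOf (spow τ (a + t + k * p)) = fOf (spow τ (a + t)) := by
    intro t k
    induction k with
    | zero => simp
    | succ k ih =>
        have e : a + t + (k + 1) * p = a + (t + k * p) + p := by ring
        rw [e, hper (t + k * p)]
        have e2 : a + (t + k * p) = a + t + k * p := by ring
        rw [e2, ih]
  refine ⟨(a + 1) * p, Nat.mul_pos (Nat.succ_pos a) hp1, ?_⟩
  set L := (a + 1) * p with hL
  have hLa : a ≤ L := by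
    calc a ≤ (a + 1) * 1 := by omega
    _ ≤ (a + 1) * p := Nat.mul_le_mul_left _ hp1
  have hidem : fOf (spow τ (L + L)) = fOf (spow τ L) := by
    have e : L + L = a + (L - a) + (a + 1) * p := by omega
    have e2 : a + (L - a) = L := by omega
    rw [e, hmul (L - a) (a + 1), e2]
  intro x y hxy
  have hcl := copyless_spow hτ L
  have hx : fOf (spow τ L) x = some y := (fOf_eq_some hcl).mpr hxy
  have hcomp := fOf_spow_add hτ L L x
  rw [hidem, hx] at hcomp
  simp only [Option.bind] at hcomp
  rw [← (fOf_eq_some hcl)]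
  exact hcomp.symm

end CRAProof
namespace CRAProof

variable {d : ℕ}

/-- Under a copyless "stable" substitution, every register satisfies (from time 1 on)
an affine recurrence with constant coefficients. -/
lemma dyn {σ : Fin d → Expr (Fin d)} (hσ : Copyless σ)
    (hP : ∀ x y, 1 ≤ (σ y).count x → 1 ≤ (σ y).count y)
    (μ : ℕ → Fin d → ℚ) (hμ : ∀ n x, μ (n + 1) x = (σ x).eval (μ n)) (x : Fin d) :
    ∃ α β : ℚ, ∀ n, 1 ≤ n → μ (n + 1) x = α * μ n x + β := by
  -- registers not occurring in their own expression are ground, hence constant from 1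
  have hground : ∀ z : Fin d, (σ z).count z = 0 → ∀ z', (σ z).count z' = 0 := by
    intro z hz z'
    by_contra hc
    have := hP z' z (by omega)
    omega
  have hconst : ∀ z : Fin d, (σ z).count z = 0 → ∀ n, 1 ≤ n → μ n z = μ 1 z := by
    intro z hz n hn
    obtain ⟨k, rfl⟩ : ∃ k, n = k + 1 := ⟨n - 1, by omega⟩
    rw [hμ k z, hμ 0 z]
    apply eval_congr
    intro z' hz'
    have := hground z hz z'
    omega
  have hx1 : (σ x).count x ≤ 1 := count_le_one hσ x x
  rcases Nat.eq_zero_or_pos ((σ x).count x) with h0 | hpos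
  · -- ground register: constant from time 1
    refine ⟨0, μ 1 x, fun n hn => ?_⟩
    rw [zero_mul, zero_add]
    exact hconst x h0 (n + 1) (by omega)
  · -- x occurs exactly once in σ x
    obtain ⟨A, B, hev, hcg⟩ := affine x (σ x) hx1
    refine ⟨A (μ 1), B (μ 1), fun n hn => ?_⟩
    have hAB : A (μ n) = A (μ 1) ∧ B (μ n) = B (μ 1) := by
      apply hcg
      intro z hzx hz
      -- z occurs in σ x and z ≠ x, so z is ground
      have hzz : (σ z).count z = 0 := by
        by_contra hc
        have := hσ z
        have h2 : 2 ≤ ∑ y : Fin d, (σ y).count z := by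
          have : ({x, z} : Finset (Fin d)).sum (fun y => (σ y).count z) ≤
              ∑ y : Fin d, (σ y).count z :=
            Finset.sum_le_sum_of_subset (Finset.subset_univ _)
          rw [Finset.sum_pair (Ne.symm hzx)] at this
          omega
        omega
      exact hconst z hzz n hn
    rw [hμ n x, hev (μ n), hAB.1, hAB.2]

/-- Each register sequence of a time-homogeneous copyless-stable dynamics is PolyRat. -/
lemma dyn_polyRat {σ : Fin d → Expr (Fin d)} (hσ : Copyless σ)
    (hP : ∀ x y, 1 ≤ (σ y).count x → 1 ≤ (σ y).count y)
    (μ : ℕ → Fin d → ℚ) (hμ : ∀ n x, μ (n + 1) x = (σ x).eval (μ n)) (x : Fin d) :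
    PolyRat (fun n => μ n x) := by
  obtain ⟨α, β, hrec⟩ := dyn hσ hP μ hμ x
  have h1 : PolyRat (fun t => μ (t + 1) x) :=
    polyRat_affineRec α β _ (fun t => hrec (t + 1) (by omega))
  exact PolyRat.shift (μ 0 x) _ _ h1 rfl (fun n => rfl)

end CRAProof
namespace CRAProof

variable {m d : ℕ}

def state (A : CRA m d) (n : ℕ) : Fin m := (A.run n).1

def nu (A : CRA m d) : ℕ → Fin d → ℚ
  | 0 => A.ν0
  | n + 1 => fun x => Expr.eval (nu A n) ((A.δ (state A n)).2 x)

lemma run_eval (A : CRA m d) :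
    ∀ n (e : Expr (Fin d)), Expr.eval A.ν0 ((A.run n).2 e) = Expr.eval (nu A n) e := by
  intro n
  induction n with
  | zero => intro e; rfl
  | succ n ih =>
      intro e
      show Expr.eval A.ν0 ((A.run n).2 (e.subst (A.δ (A.run n).1).2)) = _
      rw [ih, eval_subst]
      rfl

lemma output_eq (A : CRA m d) (n : ℕ) :
    A.output n = Expr.eval (nu A n) (A.μ (state A n)) := run_eval A n _

lemma state_succ (A : CRA m d) (n : ℕ) : state A (n + 1) = (A.δ (state A n)).1 := rfl

lemma state_shift (A : CRA m d) {a b : ℕ} (h : state A a = state A b) :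
    ∀ j, state A (a + j) = state A (b + j) := by
  intro j
  induction j with
  | zero => exact h
  | succ j ih => rw [← Nat.add_assoc, ← Nat.add_assoc, state_succ, state_succ, ih]

/-- The substitution accumulated over the time interval `[j, j+k)`. -/
def Sub (A : CRA m d) (j : ℕ) : ℕ → Fin d → Expr (Fin d)
  | 0 => fun x => .reg x
  | k + 1 => fun x => ((A.δ (state A (j + k))).2 x).subst (Sub A j k)

lemma copyless_Sub (A : CRA m d) (hA : A.IsCopyless) (j : ℕ) :
    ∀ k, Copyless (Sub A j k) := by
  intro k
  induction k with
  | zero => exact copyless_reg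
  | succ k ih => exact copyless_comp (hA _) ih

lemma nu_Sub (A : CRA m d) (j : ℕ) :
    ∀ k (x : Fin d), nu A (j + k) x = Expr.eval (nu A j) (Sub A j k x) := by
  intro k
  induction k with
  | zero => intro x; rfl
  | succ k ih =>
      intro x
      show Expr.eval (nu A (j + k)) ((A.δ (state A (j + k))).2 x) = _
      have : nu A (j + k) = fun z => Expr.eval (nu A j) (Sub A j k z) := funext ih
      rw [this]
      rw [show (Sub A j (k+1) x) = ((A.δ (state A (j + k))).2 x).subst (Sub A j k) from rfl,
        eval_subst]

lemma Sub_congr (A : CRA m d) (j j' : ℕ) :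
    ∀ k, (∀ i, i < k → state A (j + i) = state A (j' + i)) → Sub A j k = Sub A j' k := by
  intro k
  induction k with
  | zero => intro _; rfl
  | succ k ih =>
      intro h
      have hk := h k (by omega)
      have hS := ih (fun i hi => h i (by omega))
      show (fun x => ((A.δ (state A (j + k))).2 x).subst (Sub A j k)) =
        (fun x => ((A.δ (state A (j' + k))).2 x).subst (Sub A j' k))
      rw [hk, hS]

/-- Generic stride lemma. -/
lemma step_spow {τ : Fin d → Expr (Fin d)} (V : ℕ → Fin d → ℚ)
    (hV : ∀ n x, V (n + 1) x = Expr.eval (V n) (τ x)) :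
    ∀ k n (x : Fin d), V (n + k) x = Expr.eval (V n) (spow τ k x) := by
  intro k
  induction k with
  | zero => intro n x; rfl
  | succ k ih =>
      intro n x
      rw [show n + (k + 1) = (n + k) + 1 from rfl, hV (n + k) x]
      have : V (n + k) = fun z => Expr.eval (V n) (spow τ k z) := funext (ih n)
      rw [this, ← eval_subst]
      rfl

end CRAProof
/-- Every sequence recognized by a copyless cost-register automaton over a
unary alphabet belongs to PolyRat. -/
theorem copyless_cra_mem_polyRat (m d : ℕ) (A : CRA m d) (hA : A.IsCopyless)
    (u : ℕ → ℚ) (hu : ∀ n : ℕ, u n = A.output n) : PolyRat u := by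
  classical
  open CRAProof in
  -- the output in terms of forward valuations
  have hout : ∀ n, u n = Expr.eval (nu A n) (A.μ (state A n)) := by
    intro n; rw [hu n, output_eq]
  -- the state sequence is eventually periodic
  obtain ⟨a', b', hne, heq'⟩ := Finite.exists_ne_map_eq_of_infinite (state A)
  obtain ⟨s, b, hab, heq⟩ : ∃ a b : ℕ, a < b ∧ state A a = state A b := by
    rcases lt_or_gt_of_ne hne with h | h
    · exact ⟨a', b', h, heq'⟩
    · exact ⟨b', a', h, heq'.symm⟩
  set p := b - s with hpdef
  have hp1 : 1 ≤ p := by omega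
  have hsp : state A (s + p) = state A s := by
    rw [show s + p = b from by omega]; exact heq.symm
  have hper : ∀ j t, state A (s + j + p * t) = state A (s + j) := by
    intro j t
    induction t with
    | zero => simp
    | succ t ih =>
        have e : s + j + p * (t + 1) = (s + p) + (j + p * t) := by ring
        rw [e, state_shift A hsp (j + p * t), show s + (j + p * t) = s + j + p * t from by ring,
          ih]
  -- it suffices to handle the tail starting at `s`
  apply polyRat_tail_to_full u s
  -- shuffle over residues mod p
  apply PolyRat.shuffle p hp1 (fun (r : Fin p) n => u (s + (p * n + (r : ℕ))))
    (fun n => u (s + n)) (fun n i => rfl)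
  intro r
  -- within a residue class, the dynamics is time-homogeneous with copyless step τ
  set τ : Fin d → Expr (Fin d) := Sub A (s + (r : ℕ)) p with hτdef
  have hτcl : Copyless τ := copyless_Sub A hA _ p
  set V : ℕ → Fin d → ℚ := fun n => nu A (s + (r : ℕ) + p * n) with hVdef
  have hVstep : ∀ n x, V (n + 1) x = Expr.eval (V n) (τ x) := by
    intro n x
    have e : s + (r : ℕ) + p * (n + 1) = (s + (r : ℕ) + p * n) + p := by ring
    show nu A (s + (r : ℕ) + p * (n + 1)) x = _
    rw [e, nu_Sub A _ p x]
    have hS : Sub A (s + (r : ℕ) + p * n) p = Sub A (s + (r : ℕ)) p := by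
      apply Sub_congr
      intro i hi
      have := hper ((r : ℕ) + i) n
      have e1 : s + (r : ℕ) + p * n + i = s + ((r : ℕ) + i) + p * n := by ring
      have e2 : s + (r : ℕ) + i = s + ((r : ℕ) + i) := by ring
      rw [e1, e2, this]
    rw [hS]
  -- pass to a stable power σ of τ
  obtain ⟨L, hL1, hP⟩ := exists_good_power hτcl
  have hσcl : Copyless (spow τ L) := copyless_spow hτcl L
  -- identify the class sequence with an evaluation along V
  have hval : ∀ n, u (s + (p * n + (r : ℕ))) =
      Expr.eval (V n) (A.μ (state A (s + (r : ℕ)))) := by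
    intro n
    rw [hout]
    have e : s + (p * n + (r : ℕ)) = s + (r : ℕ) + p * n := by ring
    rw [e, hper (r : ℕ) n]
  apply polyRat_congr (fun n => (hval n).symm)
  -- shuffle over sub-residues mod L
  apply PolyRat.shuffle L hL1
    (fun (j : Fin L) t => Expr.eval (V (L * t + (j : ℕ))) (A.μ (state A (s + (r : ℕ)))))
    _ (fun n i => rfl)
  intro j
  -- each sub-class is an evaluation of a PolyRat register family
  apply eval_polyRat (fun t => V (L * t + (j : ℕ)))
  intro x
  have hμc : ∀ t y, V (L * (t + 1) + (j : ℕ)) y = Expr.eval (V (L * t + (j : ℕ))) (spow τ L y) := by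
    intro t y
    have e : L * (t + 1) + (j : ℕ) = (L * t + (j : ℕ)) + L := by ring
    rw [e, step_spow V hVstep L _ y]
  exact dyn_polyRat hσcl hP (fun t => V (L * t + (j : ℕ))) hμc x
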